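/- Let k ≥ 2 be an integer. For every a > 0 and every x > 0 the integral I_a(x) = (1/(2π)) ∫_ℝ Γ(a + k + it) Γ(a + 1/2 + it) Γ(1 − a − it)⁻¹ x^(−(1+a+it)) dt converges absolutely, and its value is independent of a: for all a, a' > 0 and all x > 0, I_a(x) = I_{a'}(x). (This integral is the contour integral (1/(2πi)) ∫_{Re s = 1+a} Γ(s+k−1) Γ(s−1/2) Γ(2−s)⁻¹ x^(−s) ds defining W_k(x).) -/

import Mathlib

open MeasureTheory Real Filter

/-- The integrand of the contour integral `(1/(2πi)) ∫_{Re s = 1+a} Γ(s+k-1) Γ(s-1/2) Γ(2-s)⁻¹ x^(-s) ds`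
parametrized by `s = 1 + a + it`. -/
noncomputable def WkIntegrand (k : ℕ) (a x : ℝ) (t : ℝ) : ℂ :=
  Complex.Gamma ((a : ℂ) + k + t * Complex.I) *
    Complex.Gamma ((a : ℂ) + 1/2 + t * Complex.I) *
    (Complex.Gamma (1 - (a : ℂ) - t * Complex.I))⁻¹ *
    (x : ℂ) ^ (-(1 + (a : ℂ) + t * Complex.I))

/-!
Euler's product formula shows that `‖Γ(σ + it)‖ / Γ(σ)` increases with `σ > 0`, while
`‖Γ(1/2 + it)‖² = π / cosh (π t)` and `Γ(z + m) = z (z + 1) ⋯ (z + m - 1) Γ(z)`; together these give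
`‖Γ(σ + it)‖ ≤ C_ε e^{(ε - π/2)|t|}` uniformly on every strip `0 < σ₀ ≤ σ ≤ σ₁`. By the reflection
formula `1 / Γ(2 - s) = Γ(s - 1) sin (π (s - 1)) / π` grows at most like `‖Γ(s - 1)‖ e^{π|t|}`, so
the integrand `Γ(s + k - 1) Γ(s - 1/2) Γ(2 - s)⁻¹ x^{-s}` is `O(e^{-|t|})` uniformly on each strip
`1 < b ≤ Re s ≤ b'`. It is therefore integrable on every vertical line `Re s > 1`, and, being
holomorphic there, Cauchy's theorem on rectangles whose horizontal sides escape to `±i∞` moves the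
line of integration without changing the integral.
-/

open Complex (I)
open scoped Topology

lemma div_norm_add_mul_I_le {u v : ℝ} (t : ℝ) (hu : 0 < u) (huv : u ≤ v) :
    u / ‖(u : ℂ) + t * I‖ ≤ v / ‖(v : ℂ) + t * I‖ := by
  have hv : 0 < v := hu.trans_le huv
  have hnorm : ∀ w : ℝ, ‖(w : ℂ) + t * I‖ = √(w ^ 2 + t ^ 2) := fun w => by
    rw [← Complex.normSq_add_mul_I, Complex.norm_def]
  have key : √(u ^ 2 * (v ^ 2 + t ^ 2)) ≤ √(v ^ 2 * (u ^ 2 + t ^ 2)) := sqrt_le_sqrt <| by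
    nlinarith [mul_le_mul_of_nonneg_right (pow_le_pow_left₀ hu.le huv 2) (sq_nonneg t)]
  rw [sqrt_mul (sq_nonneg _), sqrt_mul (sq_nonneg _), sqrt_sq hu.le, sqrt_sq hv.le] at key
  rw [hnorm, hnorm, div_le_div_iff₀ (by positivity) (by positivity)]
  exact key

lemma add_pow_le_mul_exp {B ε u : ℝ} (hB : 0 ≤ B) (hε : 0 < ε) (hu : 0 ≤ u) (N : ℕ) :
    (B + u) ^ N ≤ N.factorial / ε ^ N * exp (ε * B) * exp (ε * u) := by
  have h := pow_div_factorial_le_exp (x := ε * (B + u)) (by positivity) N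
  rw [div_le_iff₀ (by positivity), mul_pow] at h
  rw [mul_assoc, ← exp_add, ← mul_add, div_mul_eq_mul_div, le_div_iff₀ (by positivity)]
  linarith

lemma norm_sin_le_exp_abs_im (z : ℂ) : ‖Complex.sin z‖ ≤ exp |z.im| := by
  have hsum : ‖Complex.exp (-z * I) - Complex.exp (z * I)‖ ≤ exp z.im + exp (-z.im) := by
    refine (norm_sub_le _ _).trans_eq ?_
    simp [Complex.norm_exp]
  rw [Complex.sin, norm_div, norm_mul, Complex.norm_I, mul_one, Complex.norm_ofNat,
    div_le_iff₀ two_pos]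
  linarith [exp_le_exp.2 (le_abs_self z.im), exp_le_exp.2 (neg_le_abs z.im)]

lemma rpow_le_max_rpow_of_mem_Icc {x y a b : ℝ} (hx : 0 < x) (hy : y ∈ Set.Icc a b) :
    x ^ y ≤ max (x ^ a) (x ^ b) := by
  rcases le_total x 1 with hx1 | hx1
  · exact le_max_of_le_left (rpow_le_rpow_of_exponent_ge hx hx1 hy.1)
  · exact le_max_of_le_right (rpow_le_rpow_of_exponent_le hx1 hy.2)

lemma integrable_exp_neg_abs : Integrable fun t : ℝ => exp (-|t|) := by
  have hIic : IntegrableOn (fun t : ℝ => exp (-|t|)) (Set.Iic 0) :=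
    (integrableOn_exp_Iic 0).congr_fun (fun t ht => by rw [abs_of_nonpos ht, neg_neg])
      measurableSet_Iic
  have hIoi : IntegrableOn (fun t : ℝ => exp (-|t|)) (Set.Ioi 0) :=
    (exp_neg_integrableOn_Ioi 0 one_pos).congr_fun (fun t ht => by
      simp [abs_of_pos (Set.mem_Ioi.1 ht)]) measurableSet_Ioi
  simpa [← integrableOn_univ] using hIic.union hIoi

lemma tendsto_exp_neg_abs_cocompact : Tendsto (fun t : ℝ => exp (-|t|)) (cocompact ℝ) (𝓝 0) :=
  tendsto_exp_neg_atTop_nhds_zero.comp tendsto_norm_cocompact_atTop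

lemma differentiableAt_Gamma_of_re_pos {s : ℂ} (hs : 0 < s.re) :
    DifferentiableAt ℂ Complex.Gamma s :=
  Complex.differentiableAt_Gamma s fun m h => by
    rw [h, Complex.neg_re, Complex.natCast_re] at hs
    linarith [(Nat.cast_nonneg m : (0 : ℝ) ≤ m)]

lemma norm_GammaSeq_div_GammaSeq {σ : ℝ} (t : ℝ) (hσ : 0 < σ) {n : ℕ} (hn : n ≠ 0) :
    ‖Complex.GammaSeq (σ + t * I) n‖ / Real.GammaSeq σ n =
      ∏ j ∈ Finset.range (n + 1), (σ + j) / ‖((σ + j : ℝ) : ℂ) + t * I‖ := by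
  have hpos : ∀ j ∈ Finset.range (n + 1), 0 < σ + j := fun j _ => by positivity
  rw [Complex.GammaSeq, Real.GammaSeq, norm_div, norm_mul, norm_prod,
    Complex.norm_natCast_cpow_of_pos (Nat.pos_of_ne_zero hn), Finset.prod_div_distrib]
  simp only [Complex.add_re, Complex.ofReal_re, Complex.mul_re, Complex.I_re, Complex.I_im,
    Complex.ofReal_im, mul_zero, mul_one, sub_zero, add_zero, Complex.norm_natCast]
  have hP := (Finset.prod_pos hpos).ne'
  have hσn : (n : ℝ) ^ σ * n.factorial ≠ 0 := by positivity
  field_simp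
  congr 1
  refine Finset.prod_congr rfl fun j _ => ?_
  push_cast; ring_nf

lemma norm_Gamma_div_Gamma_le {σ τ : ℝ} (t : ℝ) (hσ : 0 < σ) (hστ : σ ≤ τ) :
    ‖Complex.Gamma (σ + t * I)‖ / Real.Gamma σ ≤ ‖Complex.Gamma (τ + t * I)‖ / Real.Gamma τ := by
  have hτ : 0 < τ := hσ.trans_le hστ
  have hlim : ∀ ρ : ℝ, 0 < ρ → Tendsto (fun n => ‖Complex.GammaSeq (ρ + t * I) n‖ /
      Real.GammaSeq ρ n) atTop (𝓝 (‖Complex.Gamma (ρ + t * I)‖ / Real.Gamma ρ)) := fun ρ hρ =>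
    (Complex.GammaSeq_tendsto_Gamma _).norm.div (Real.GammaSeq_tendsto_Gamma ρ)
      (Real.Gamma_pos_of_pos hρ).ne'
  refine le_of_tendsto_of_tendsto (hlim σ hσ) (hlim τ hτ) ?_
  filter_upwards [eventually_ne_atTop 0] with n hn
  rw [norm_GammaSeq_div_GammaSeq t hσ hn, norm_GammaSeq_div_GammaSeq t hτ hn]
  exact Finset.prod_le_prod (fun j _ => by positivity)
    fun j _ => div_norm_add_mul_I_le t (by positivity) (by linarith)

lemma sq_norm_Gamma_one_half_add_mul_I (t : ℝ) :
    ‖Complex.Gamma (1 / 2 + t * I)‖ ^ 2 = π / cosh (π * t) := by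
  have hconj : (1 : ℂ) - (1 / 2 + t * I) = (starRingEnd ℂ) (1 / 2 + t * I) := by
    simp [Complex.ext_iff]; norm_num
  have hsin : Complex.sin (π * (1 / 2 + t * I)) = (cosh (π * t) : ℂ) := by
    rw [mul_add, Complex.sin_add, show (π : ℂ) * (1 / 2) = π / 2 by ring,
      Complex.sin_pi_div_two, Complex.cos_pi_div_two,
      show (π : ℂ) * (t * I) = (π * t : ℂ) * I by ring, Complex.cos_mul_I]
    push_cast
    ring
  have h := Complex.Gamma_mul_Gamma_one_sub (1 / 2 + t * I)
  rw [hconj, Complex.Gamma_conj, Complex.mul_conj, hsin, ← Complex.ofReal_div] at h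
  rw [Complex.sq_norm]
  exact_mod_cast h

lemma norm_Gamma_one_half_add_mul_I_le (t : ℝ) :
    ‖Complex.Gamma (1 / 2 + t * I)‖ ≤ √(2 * π) * exp (-(π / 2) * |t|) := by
  have hcosh : exp (π * |t|) ≤ 2 * cosh (π * t) := by
    have := exp_abs_le (π * t)
    rwa [abs_mul, abs_of_pos pi_pos, ← mul_div_cancel₀ (exp (π * t) + exp (-(π * t)))
      two_ne_zero, ← cosh_eq] at this
  rw [← pow_le_pow_iff_left₀ (norm_nonneg _) (by positivity) two_ne_zero,
    sq_norm_Gamma_one_half_add_mul_I, mul_pow, sq_sqrt (by positivity), ← exp_nat_mul,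
    div_le_iff₀ (cosh_pos _)]
  have hexp : exp (π * |t|) * exp ((2 : ℕ) * (-(π / 2) * |t|)) = 1 := by
    rw [← exp_add]; push_cast; ring_nf; exact exp_zero
  calc π = π * exp ((2 : ℕ) * (-(π / 2) * |t|)) * exp (π * |t|) := by
        rw [mul_assoc, mul_comm (exp _), hexp, mul_one]
    _ ≤ π * exp ((2 : ℕ) * (-(π / 2) * |t|)) * (2 * cosh (π * t)) := by gcongr
    _ = _ := by ring

lemma norm_Gamma_add_nat_le {z : ℂ} (hz : 0 < z.re) (m : ℕ) :
    ‖Complex.Gamma (z + m)‖ ≤ (‖z‖ + m) ^ m * ‖Complex.Gamma z‖ := by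
  induction m with
  | zero => simp
  | succ m ih =>
    have hne : z + m ≠ 0 := fun h => by
      have := congrArg Complex.re h
      simp only [Complex.add_re, Complex.natCast_re, Complex.zero_re] at this
      linarith [(Nat.cast_nonneg m : (0 : ℝ) ≤ m)]
    have hnorm : ‖z + m‖ ≤ ‖z‖ + (m + 1) := by
      refine (norm_add_le _ _).trans ?_
      rw [Complex.norm_natCast]; linarith
    rw [Nat.cast_succ, ← add_assoc, Complex.Gamma_add_one _ hne, norm_mul]
    calc ‖z + m‖ * ‖Complex.Gamma (z + m)‖
        ≤ (‖z‖ + (m + 1)) * ((‖z‖ + m) ^ m * ‖Complex.Gamma z‖) :=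
          mul_le_mul hnorm ih (norm_nonneg _) (by positivity)
      _ ≤ (‖z‖ + (m + 1)) * ((‖z‖ + (m + 1)) ^ m * ‖Complex.Gamma z‖) := by gcongr; linarith
      _ = _ := by push_cast; ring

lemma exists_norm_Gamma_le_on_strip {σ₀ : ℝ} (σ₁ : ℝ) {ε : ℝ} (hσ₀ : 0 < σ₀) (hε : 0 < ε) :
    ∃ C, 0 ≤ C ∧ ∀ σ ∈ Set.Icc σ₀ σ₁, ∀ t : ℝ,
      ‖Complex.Gamma (σ + t * I)‖ ≤ C * exp ((ε - π / 2) * |t|) := by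
  obtain ⟨m, hm⟩ := exists_nat_ge σ₁
  refine ⟨max (Real.Gamma σ₀) (Real.Gamma σ₁) / Real.Gamma (m + 1 / 2) *
      (m.factorial / ε ^ m * exp (ε * (1 / 2 + m))) * √(2 * π), by positivity, fun σ hσ t => ?_⟩
  have hσpos : 0 < σ := hσ₀.trans_le hσ.1
  have hGammaσ : Real.Gamma σ ≤ max (Real.Gamma σ₀) (Real.Gamma σ₁) :=
    convexOn_Gamma.le_max_of_mem_Icc hσ₀ (hσ₀.trans_le (hσ.1.trans hσ.2)) hσ
  have hmono := norm_Gamma_div_Gamma_le t hσpos (show σ ≤ m + 1 / 2 by linarith [hσ.2])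
  have hshift : ‖Complex.Gamma (((m + 1 / 2 : ℝ) : ℂ) + t * I)‖ ≤
      (1 / 2 + |t| + m) ^ m * (√(2 * π) * exp (-(π / 2) * |t|)) := by
    have h := norm_Gamma_add_nat_le (z := 1 / 2 + t * I) (by simp) m
    have hz : ‖(1 / 2 + t * I : ℂ)‖ ≤ 1 / 2 + |t| := by
      refine (norm_add_le _ _).trans ?_
      simp
    rw [show (1 / 2 + t * I : ℂ) + m = ((m + 1 / 2 : ℝ) : ℂ) + t * I by push_cast; ring] at h
    refine h.trans ?_
    gcongr
    exact norm_Gamma_one_half_add_mul_I_le t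
  have hpoly := add_pow_le_mul_exp (B := 1 / 2 + m) (by positivity) hε (abs_nonneg t) m
  rw [add_right_comm] at hshift
  calc ‖Complex.Gamma (σ + t * I)‖
      ≤ ‖Complex.Gamma (((m + 1 / 2 : ℝ) : ℂ) + t * I)‖ / Real.Gamma (m + 1 / 2) *
          Real.Gamma σ := (div_le_iff₀ (Gamma_pos_of_pos hσpos)).1 hmono
    _ ≤ m.factorial / ε ^ m * exp (ε * (1 / 2 + m)) * exp (ε * |t|) *
          (√(2 * π) * exp (-(π / 2) * |t|)) / Real.Gamma (m + 1 / 2) *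
          max (Real.Gamma σ₀) (Real.Gamma σ₁) := by
        gcongr
        exact hshift.trans (by gcongr)
    _ = _ := by
        rw [show (ε - π / 2) * |t| = ε * |t| + -(π / 2) * |t| by ring, exp_add]
        ring

lemma norm_inv_Gamma_one_sub_le {s : ℂ} (hs : 0 < s.re) :
    ‖(Complex.Gamma (1 - s))⁻¹‖ ≤ ‖Complex.Gamma s‖ * exp (π * |s.im|) / π := by
  by_cases h : Complex.Gamma (1 - s) = 0
  · rw [h, inv_zero, norm_zero]
    positivity
  have hreflection := Complex.Gamma_mul_Gamma_one_sub s
  have hsin : Complex.sin (π * s) ≠ 0 := fun h0 => by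
    rw [h0, div_zero] at hreflection
    exact mul_ne_zero (Complex.Gamma_ne_zero_of_re_pos hs) h hreflection
  have hinv : (Complex.Gamma (1 - s))⁻¹ = Complex.Gamma s * Complex.sin (π * s) / π := by
    refine inv_eq_of_mul_eq_one_left ?_
    rw [div_mul_eq_mul_div, mul_right_comm, hreflection, div_mul_cancel₀ _ hsin,
      div_self (Complex.ofReal_ne_zero.2 pi_ne_zero)]
  have hsin_le : ‖Complex.sin (π * s)‖ ≤ exp (π * |s.im|) := by
    refine (norm_sin_le_exp_abs_im _).trans_eq ?_
    rw [Complex.im_ofReal_mul, abs_mul, abs_of_pos pi_pos]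
  rw [hinv, norm_div, norm_mul, Complex.norm_real, norm_of_nonneg pi_pos.le]
  gcongr

section VerticalLines

variable {f : ℂ → ℂ} {b b' : ℝ}

lemma tendsto_integral_horizontal_cocompact {g : ℝ → ℝ} (hg : Tendsto g (cocompact ℝ) (𝓝 0))
    (hfg : ∀ σ ∈ Set.uIcc b b', ∀ t : ℝ, ‖f (σ + t * I)‖ ≤ g t) :
    Tendsto (fun y : ℝ => ∫ σ in b..b', f (σ + y * I)) (cocompact ℝ) (𝓝 0) := by
  refine squeeze_zero_norm (fun y => ?_) (by simpa using hg.mul_const |b' - b|)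
  exact intervalIntegral.norm_integral_le_of_norm_le_const fun σ hσ =>
    hfg σ (Set.uIoc_subset_uIcc hσ) y

theorem integral_vertical_eq_of_differentiableOn (hbb' : b ≤ b')
    (hf : DifferentiableOn ℂ f (Set.Icc b b' ×ℂ Set.univ))
    (hb : Integrable fun t : ℝ => f (b + t * I)) (hb' : Integrable fun t : ℝ => f (b' + t * I))
    {g : ℝ → ℝ} (hg : Tendsto g (cocompact ℝ) (𝓝 0))
    (hfg : ∀ σ ∈ Set.Icc b b', ∀ t : ℝ, ‖f (σ + t * I)‖ ≤ g t) :
    ∫ t : ℝ, f (b + t * I) = ∫ t : ℝ, f (b' + t * I) := by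
  have hrect : ∀ T : ℝ, (∫ σ in b..b', f (σ + ((-T : ℝ) : ℂ) * I)) -
      (∫ σ in b..b', f (σ + T * I)) + I • (∫ t in -T..T, f (b' + t * I)) -
        I • (∫ t in -T..T, f (b + t * I)) = 0 := fun T =>
    Complex.integral_boundary_rect_eq_zero_of_differentiableOn f ⟨b, -T⟩ ⟨b', T⟩ <|
      hf.mono <| Complex.reProdIm_subset_iff.2 <| Set.prod_mono (by simp [Set.uIcc_of_le hbb'])
        (Set.subset_univ _)
  have hhor := tendsto_integral_horizontal_cocompact hg
    (fun σ hσ => hfg σ (by rwa [Set.uIcc_of_le hbb'] at hσ))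
  have hvert : ∀ c : ℝ, Integrable (fun t : ℝ => f (c + t * I)) →
      Tendsto (fun T : ℝ => ∫ t in -T..T, f (c + t * I)) atTop (𝓝 (∫ t : ℝ, f (c + t * I))) :=
    fun c hc => intervalIntegral_tendsto_integral hc tendsto_neg_atTop_atBot tendsto_id
  have hlim : Tendsto (fun T : ℝ => (∫ σ in b..b', f (σ + ((-T : ℝ) : ℂ) * I)) -
      (∫ σ in b..b', f (σ + T * I)) + I • (∫ t in -T..T, f (b' + t * I)) -
        I • (∫ t in -T..T, f (b + t * I))) atTop
      (𝓝 (0 - 0 + I • (∫ t : ℝ, f (b' + t * I)) - I • ∫ t : ℝ, f (b + t * I))) :=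
    (((hhor.comp (tendsto_neg_atTop_atBot.mono_right atBot_le_cocompact)).sub
      (hhor.comp atTop_le_cocompact)).add ((hvert b' hb').const_smul I)).sub
      ((hvert b hb).const_smul I)
  have hzero := tendsto_nhds_unique hlim (tendsto_const_nhds.congr fun T => (hrect T).symm)
  rw [sub_self, zero_add, sub_eq_zero, smul_eq_mul, smul_eq_mul] at hzero
  exact (mul_left_cancel₀ Complex.I_ne_zero hzero).symm

end VerticalLines

noncomputable def WkKernel (k : ℕ) (x : ℝ) (s : ℂ) : ℂ :=
  Complex.Gamma (s + k - 1) * Complex.Gamma (s - 1 / 2) * (Complex.Gamma (2 - s))⁻¹ *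
    (x : ℂ) ^ (-s)

lemma WkIntegrand_eq_WkKernel (k : ℕ) (a x t : ℝ) :
    WkIntegrand k a x t = WkKernel k x ((1 + a : ℝ) + t * I) := by
  simp only [WkIntegrand, WkKernel]
  push_cast
  ring_nf

lemma differentiableAt_WkKernel (k : ℕ) {x : ℝ} (hx : x ≠ 0) {s : ℂ} (hs : 1 < s.re) :
    DifferentiableAt ℂ (WkKernel k x) s := by
  have h₁ : DifferentiableAt ℂ (fun s : ℂ => Complex.Gamma (s + k - 1)) s :=
    (differentiableAt_Gamma_of_re_pos <| by
      rw [Complex.sub_re, Complex.add_re, Complex.natCast_re, Complex.one_re]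
      linarith [(Nat.cast_nonneg k : (0 : ℝ) ≤ k)]).comp s (by fun_prop)
  have h₂ : DifferentiableAt ℂ (fun s : ℂ => Complex.Gamma (s - 1 / 2)) s :=
    (differentiableAt_Gamma_of_re_pos (by simp; linarith)).comp s (by fun_prop)
  have h₃ : DifferentiableAt ℂ (fun s : ℂ => (Complex.Gamma (2 - s))⁻¹) s :=
    (Complex.differentiable_one_div_Gamma _).comp s (by fun_prop)
  have h₄ : DifferentiableAt ℂ (fun s : ℂ => (x : ℂ) ^ (-s)) s :=
    differentiableAt_id.neg.const_cpow (Or.inl (Complex.ofReal_ne_zero.2 hx))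
  exact ((h₁.mul h₂).mul h₃).mul h₄

lemma exists_norm_WkKernel_le_on_strip (k : ℕ) {x b b' : ℝ} (hx : 0 < x) (hb : 1 < b) :
    ∃ K, ∀ σ ∈ Set.Icc b b', ∀ t : ℝ, ‖WkKernel k x (σ + t * I)‖ ≤ K * exp (-|t|) := by
  -- `3 (ε - π / 2) + π = -1`: the three Gamma factors and the reflection factor `exp (π |t|)`
  -- combine to `exp (-|t|)`
  set ε := (π / 2 - 1) / 3 with hε_def
  have hε : 0 < ε := by linarith [pi_gt_three]
  have hk : (0 : ℝ) ≤ k := Nat.cast_nonneg k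
  obtain ⟨C₁, hC₁, hΓ₁⟩ := exists_norm_Gamma_le_on_strip (b' + k - 1) (σ₀ := b + k - 1)
    (by linarith) hε
  obtain ⟨C₂, hC₂, hΓ₂⟩ := exists_norm_Gamma_le_on_strip (b' - 1 / 2) (σ₀ := b - 1 / 2)
    (by linarith) hε
  obtain ⟨C₃, hC₃, hΓ₃⟩ := exists_norm_Gamma_le_on_strip (b' - 1) (σ₀ := b - 1) (by linarith) hε
  set X := max (x ^ (-b')) (x ^ (-b))
  refine ⟨C₁ * C₂ * C₃ * X / π, fun σ hσ t => ?_⟩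
  set E := exp ((ε - π / 2) * |t|)
  have h₁ : ‖Complex.Gamma (σ + t * I + k - 1)‖ ≤ C₁ * E := by
    rw [show (σ + t * I + k - 1 : ℂ) = ((σ + k - 1 : ℝ) : ℂ) + t * I by push_cast; ring]
    exact hΓ₁ _ ⟨by linarith [hσ.1], by linarith [hσ.2]⟩ t
  have h₂ : ‖Complex.Gamma (σ + t * I - 1 / 2)‖ ≤ C₂ * E := by
    rw [show (σ + t * I - 1 / 2 : ℂ) = ((σ - 1 / 2 : ℝ) : ℂ) + t * I by push_cast; ring]
    exact hΓ₂ _ ⟨by linarith [hσ.1], by linarith [hσ.2]⟩ t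
  have h₃ : ‖(Complex.Gamma (2 - (σ + t * I)))⁻¹‖ ≤ C₃ * E * exp (π * |t|) / π := by
    have h := norm_inv_Gamma_one_sub_le (s := ((σ - 1 : ℝ) : ℂ) + t * I)
      (by simp; linarith [hσ.1])
    rw [show (1 - (((σ - 1 : ℝ) : ℂ) + t * I)) = 2 - (σ + t * I) by push_cast; ring] at h
    refine h.trans ?_
    simp only [Complex.add_im, Complex.ofReal_im, Complex.mul_im, Complex.ofReal_re,
      Complex.I_im, Complex.I_re, mul_one, mul_zero, zero_add, add_zero]
    gcongr
    exact hΓ₃ _ ⟨by linarith [hσ.1], by linarith [hσ.2]⟩ t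
  have h₄ : ‖(x : ℂ) ^ (-(σ + t * I))‖ ≤ X := by
    rw [Complex.norm_cpow_eq_rpow_re_of_pos hx]
    simp only [Complex.neg_re, Complex.add_re, Complex.ofReal_re, Complex.mul_re, Complex.I_re,
      Complex.I_im, Complex.ofReal_im, mul_zero, mul_one, sub_zero, add_zero]
    exact rpow_le_max_rpow_of_mem_Icc hx ⟨by linarith [hσ.2], by linarith [hσ.1]⟩
  calc ‖WkKernel k x (σ + t * I)‖
      ≤ C₁ * E * (C₂ * E) * (C₃ * E * exp (π * |t|) / π) * X := by
        simp only [WkKernel, norm_mul]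
        gcongr
    _ = C₁ * C₂ * C₃ * X / π * (E * E * E * exp (π * |t|)) := by ring
    _ = C₁ * C₂ * C₃ * X / π * exp (-|t|) := by
        simp only [E, ← exp_add, hε_def]
        ring_nf

lemma integrable_WkKernel_vertical (k : ℕ) {x b : ℝ} (hx : 0 < x) (hb : 1 < b) :
    Integrable fun t : ℝ => WkKernel k x (b + t * I) := by
  obtain ⟨K, hK⟩ := exists_norm_WkKernel_le_on_strip k (b' := b) hx hb
  have hcont : Continuous fun t : ℝ => WkKernel k x (b + t * I) :=
    continuous_iff_continuousAt.2 fun t =>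
      (differentiableAt_WkKernel k hx.ne' (by simpa using hb)).continuousAt.comp
        (f := fun t : ℝ => (b : ℂ) + t * I) (by fun_prop)
  exact (integrable_exp_neg_abs.const_mul K).mono' hcont.aestronglyMeasurable
    (Eventually.of_forall (hK b ⟨le_rfl, le_rfl⟩))

lemma integral_WkKernel_vertical_eq (k : ℕ) {x b b' : ℝ} (hx : 0 < x) (hb : 1 < b)
    (hbb' : b ≤ b') :
    ∫ t : ℝ, WkKernel k x (b + t * I) = ∫ t : ℝ, WkKernel k x (b' + t * I) := by
  obtain ⟨K, hK⟩ := exists_norm_WkKernel_le_on_strip k (b' := b') hx hb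
  refine integral_vertical_eq_of_differentiableOn hbb' (fun s hs => ?_)
    (integrable_WkKernel_vertical k hx hb) (integrable_WkKernel_vertical k hx (hb.trans_le hbb'))
    (by simpa using tendsto_exp_neg_abs_cocompact.const_mul K) hK
  exact (differentiableAt_WkKernel k hx.ne' (hb.trans_le hs.1.1)).differentiableWithinAt

theorem Wk_integral_wellDefined_general (k : ℕ) :
    (∀ a x : ℝ, 0 < a → 0 < x → MeasureTheory.Integrable (WkIntegrand k a x)) ∧
    (∀ a a' x : ℝ, 0 < a → 0 < a' → 0 < x →
      (1 / (2 * Real.pi) : ℂ) * ∫ t : ℝ, WkIntegrand k a x t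
        = (1 / (2 * Real.pi) : ℂ) * ∫ t : ℝ, WkIntegrand k a' x t) := by
  have hWk : ∀ a x : ℝ, WkIntegrand k a x = fun t : ℝ => WkKernel k x ((1 + a : ℝ) + t * I) :=
    fun a x => funext (WkIntegrand_eq_WkKernel k a x)
  refine ⟨fun a x ha hx => ?_, fun a a' x ha ha' hx => ?_⟩
  · rw [hWk]
    exact integrable_WkKernel_vertical k hx (by linarith)
  · rw [hWk, hWk]
    congr 1
    rcases le_total a a' with h | h
    · exact integral_WkKernel_vertical_eq k hx (by linarith) (by linarith)
    · exact (integral_WkKernel_vertical_eq k hx (by linarith) (by linarith)).symm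

/-- for every `a > 0` and `x > 0` the integral
`I_a(x) = (1/(2π)) ∫_ℝ Γ(a+k+it) Γ(a+1/2+it) Γ(1-a-it)⁻¹ x^(-(1+a+it)) dt`
converges absolutely, and its value is independent of `a`. -/
theorem Wk_integral_wellDefined (k : ℕ) (hk : 2 ≤ k) :
    (∀ a x : ℝ, 0 < a → 0 < x → MeasureTheory.Integrable (WkIntegrand k a x)) ∧
    (∀ a a' x : ℝ, 0 < a → 0 < a' → 0 < x →
      (1 / (2 * Real.pi) : ℂ) * ∫ t : ℝ, WkIntegrand k a x t
        = (1 / (2 * Real.pi) : ℂ) * ∫ t : ℝ, WkIntegrand k a' x t) :=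
  Wk_integral_wellDefined_general k
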